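/- arXiv:1611.02885 — 11 statements merged into one kernel-verified Lean document; each statement's English description precedes it below -/
import Mathlib

section
/- A CI-net N is satisfiable if and only if there is no nonempty cycle of worsening flips with respect to N, i.e., no set S ⊆ O with a sequence of at least one worsening flip leading from S back to S. -/
variable {O : Type*} [Fintype O] [DecidableEq O]

/-- A strict partial order: irreflexive, asymmetric, transitive. -/
def IsPrefRel {α : Type*} (r : α → α → Prop) : Prop :=
  (∀ a, ¬ r a a) ∧ (∀ a b, r a b → ¬ r b a) ∧ (∀ a b c, r a b → r b c → r a c)

/-- Monotonicity on subsets of `O`: a strict superset is strictly preferred. -/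
def Monotonic (r : Finset O → Finset O → Prop) : Prop :=
  ∀ a b : Finset O, b ⊂ a → r a b

/-- A CI-statement `S⁺, S⁻ : S₁ ▷ S₂` on `O`. -/
structure CIStmt (O : Type*) [DecidableEq O] where
  sp : Finset O
  sm : Finset O
  s1 : Finset O
  s2 : Finset O
  h1 : s1.Nonempty
  h2 : s2.Nonempty
  dpm : Disjoint sp sm
  dp1 : Disjoint sp s1
  dp2 : Disjoint sp s2
  dm1 : Disjoint sm s1
  dm2 : Disjoint sm s2
  d12 : Disjoint s1 s2

/-- `r` satisfies a CI-statement. -/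
def SatStmt (r : Finset O → Finset O → Prop) (c : CIStmt O) : Prop :=
  ∀ S' : Finset O, S' ⊆ Finset.univ \ (c.sp ∪ c.sm ∪ c.s1 ∪ c.s2) →
    r (S' ∪ c.sp ∪ c.s1) (S' ∪ c.sp ∪ c.s2)

/-- `r` satisfies a CI-net: monotone and satisfies each statement. -/
def SatNet (r : Finset O → Finset O → Prop) (N : Set (CIStmt O)) : Prop :=
  Monotonic r ∧ ∀ c ∈ N, SatStmt r c

/-- A CI-net is satisfiable. -/
def CISatisfiable (N : Set (CIStmt O)) : Prop :=
  ∃ r : Finset O → Finset O → Prop, IsPrefRel r ∧ SatNet r N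

/-- CI-flip with respect to `N`. -/
def CIFlip (N : Set (CIStmt O)) (a b : Finset O) : Prop :=
  ∃ c ∈ N, ∃ S' ⊆ Finset.univ \ (c.sp ∪ c.sm ∪ c.s1 ∪ c.s2),
    a = S' ∪ c.sp ∪ c.s1 ∧ b = S' ∪ c.sp ∪ c.s2

/-- Worsening flip: a `⊃`-flip or a CI-flip. -/
def WFlip (N : Set (CIStmt O)) (a b : Finset O) : Prop :=
  b ⊂ a ∨ CIFlip N a b

/-- The intersection of all preference relations satisfying `N`. -/
def Induced (N : Set (CIStmt O)) (a b : Finset O) : Prop :=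
  ∀ r : Finset O → Finset O → Prop, IsPrefRel r ∧ SatNet r N → r a b

/-! A satisfying order must contain every worsening flip, hence, being transitive, every chain
of flips; so a cycle of flips contradicts irreflexivity. Conversely, without cycles the
transitive closure of the flip relation is itself a strict partial order, and it satisfies `N`
because every single flip lies in it. -/

theorem isPrefRel_transGen_of_acyclic {α : Type*} {r : α → α → Prop}
    (h : ¬ ∃ a, Relation.TransGen r a a) : IsPrefRel (Relation.TransGen r) :=
  ⟨fun a ha => h ⟨a, ha⟩, fun a _ hab hba => h ⟨a, hab.trans hba⟩,
    fun _ _ _ hab hbc => hab.trans hbc⟩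

theorem satNet_iff_wFlip_le {r : Finset O → Finset O → Prop} {N : Set (CIStmt O)} :
    SatNet r N ↔ WFlip N ≤ r := by
  constructor
  · rintro ⟨hmono, hsat⟩ a b (hsub | ⟨c, hc, S', hS', rfl, rfl⟩)
    · exact hmono a b hsub
    · exact hsat c hc S' hS'
  · intro hflip
    exact ⟨fun a b hsub => hflip a b (Or.inl hsub),
      fun c hc S' hS' => hflip _ _ (Or.inr ⟨c, hc, S', hS', rfl, rfl⟩)⟩

/-- a CI-net is satisfiable iff there is no nonempty cycle of
worsening flips. -/
theorem stmt_2 (N : Set (CIStmt O)) :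
    CISatisfiable N ↔ ¬ ∃ S : Finset O, Relation.TransGen (WFlip N) S S := by
  constructor
  · rintro ⟨r, ⟨hirr, -, htrans⟩, hsat⟩ ⟨S, hS⟩
    have : IsTrans _ r := ⟨htrans⟩
    exact hirr S (Relation.transGen_minimal (satNet_iff_wFlip_le.mp hsat) S S hS)
  · intro hacyclic
    exact ⟨Relation.TransGen (WFlip N), isPrefRel_transGen_of_acyclic hacyclic,
      satNet_iff_wFlip_le.mpr fun _ _ => Relation.TransGen.single⟩
end

section
/- For a satisfiable CI-net N on a finite set O and S_a, S_b ⊆ O: S_a >_N S_b if and only if there exists a sequence of worsening flips with respect to N from S_a to S_b. -/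
variable {O : Type*} [Fintype O] [DecidableEq O]

/-!
Every satisfying strict order contains all worsening flips and is transitive, hence contains
flip-reachability. Conversely, flip-reachability is itself monotonic, satisfies `N`, and is
transitive; it is irreflexive because it sits inside some satisfying strict order.
-/

open Relation

section
variable {N : Set (CIStmt O)} {r : Finset O → Finset O → Prop}

lemma wFlip_le_of_satNet (hN : SatNet r N) : WFlip N ≤ r := by
  rintro a b (hsub | ⟨c, hc, S', hS', rfl, rfl⟩)
  · exact hN.1 a b hsub
  · exact hN.2 c hc S' hS'

lemma transGen_wFlip_le (hr : IsPrefRel r) (hN : SatNet r N) : TransGen (WFlip N) ≤ r := by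
  have : IsTrans _ r := ⟨hr.2.2⟩
  exact transGen_minimal (wFlip_le_of_satNet hN)

lemma satNet_transGen_wFlip (N : Set (CIStmt O)) : SatNet (TransGen (WFlip N)) N :=
  ⟨fun _ _ hsub => .single (.inl hsub),
    fun c hc S' hS' => .single (.inr ⟨c, hc, S', hS', rfl, rfl⟩)⟩

lemma isPrefRel_transGen_wFlip (h : CISatisfiable N) : IsPrefRel (TransGen (WFlip N)) := by
  obtain ⟨r, hr, hN⟩ := h
  have hle := transGen_wFlip_le hr hN
  exact ⟨fun a ha => hr.1 a (hle _ _ ha),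
    fun a b hab hba => hr.2.1 a b (hle _ _ hab) (hle _ _ hba),
    fun _ _ _ => TransGen.trans⟩

end

/-- for a satisfiable CI-net, the induced relation coincides with
reachability by (nonempty) sequences of worsening flips. -/
theorem stmt_3 (N : Set (CIStmt O)) (h : CISatisfiable N) (Sa Sb : Finset O) :
    Induced N Sa Sb ↔ Relation.TransGen (WFlip N) Sa Sb :=
  ⟨fun hind => hind _ ⟨isPrefRel_transGen_wFlip h, satNet_transGen_wFlip N⟩,
    fun hflips _ ⟨hr, hN⟩ => transGen_wFlip_le hr hN _ _ hflips⟩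
end

section
/- Every monotonic strict partial order on 2^O for a finite set O is captured by some CI-net: there is a CI-net N such that the induced relation >_N equals the given order. -/
variable {O : Type*} [Fintype O] [DecidableEq O]

/-
The CI-net of all CI-statements that `r` satisfies captures `r`. A pair `a > b` with `a ⊅ b`
is itself such a statement: take `S⁺ = a ∩ b`, `S⁻ = (a ∪ b)ᶜ`, `S₁ = a \ b`, `S₂ = b \ a`.
These four sets cover `O`, so the only admissible context is `∅` and the statement compares
exactly `a` with `b`. Hence every preference relation satisfying the net contains `r` (pairs
with `a ⊃ b` by monotonicity), and `r` is one of them.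
-/

namespace CIStmt

instance : Finite (CIStmt O) :=
  Finite.of_injective (fun c : CIStmt O => (c.sp, c.sm, c.s1, c.s2)) <| by
    rintro ⟨⟩ ⟨⟩ h
    simp only [Prod.mk.injEq] at h
    obtain ⟨rfl, rfl, rfl, rfl⟩ := h
    rfl

def ofPair {a b : Finset O} (h1 : (a \ b).Nonempty) (h2 : (b \ a).Nonempty) : CIStmt O where
  sp := a ∩ b
  sm := (a ∪ b)ᶜ
  s1 := a \ b
  s2 := b \ a
  h1 := h1
  h2 := h2
  dpm := disjoint_compl_right_iff.mpr Finset.inter_subset_union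
  dp1 := (Finset.disjoint_sdiff_inter a b).symm
  dp2 := Finset.inter_comm a b ▸ (Finset.disjoint_sdiff_inter b a).symm
  dm1 := disjoint_compl_left_iff.mpr (Finset.sdiff_subset.trans Finset.subset_union_left)
  dm2 := disjoint_compl_left_iff.mpr (Finset.sdiff_subset.trans Finset.subset_union_right)
  d12 := disjoint_sdiff_sdiff

theorem ofPair_cover {a b : Finset O} (h1 : (a \ b).Nonempty) (h2 : (b \ a).Nonempty) :
    let c := ofPair h1 h2
    c.sp ∪ c.sm ∪ c.s1 ∪ c.s2 = Finset.univ := by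
  ext x
  simp only [ofPair, Finset.mem_union, Finset.mem_inter, Finset.mem_compl, Finset.mem_sdiff,
    Finset.mem_univ, iff_true]
  tauto

end CIStmt

theorem satStmt_ofPair_iff {r : Finset O → Finset O → Prop} {a b : Finset O}
    (h1 : (a \ b).Nonempty) (h2 : (b \ a).Nonempty) :
    SatStmt r (CIStmt.ofPair h1 h2) ↔ r a b := by
  have hcover := CIStmt.ofPair_cover h1 h2
  simp only [SatStmt, hcover, Finset.sdiff_self, Finset.subset_empty, forall_eq,
    Finset.empty_union]
  simp only [CIStmt.ofPair]
  rw [Finset.union_comm, Finset.sdiff_union_inter, Finset.union_comm, Finset.inter_comm,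
    Finset.sdiff_union_inter]

theorem sdiff_nonempty_of_monotonic {α : Type*} [DecidableEq α] {r : Finset α → Finset α → Prop}
    (hasymm : ∀ a b, r a b → ¬ r b a) (hm : Monotonic r) {a b : Finset α}
    (hab : r a b) (hba : ¬ b ⊂ a) : (a \ b).Nonempty ∧ (b \ a).Nonempty := by
  have hne : a ≠ b := by rintro rfl; exact hasymm a a hab hab
  refine ⟨Finset.sdiff_nonempty.mpr fun hsub => ?_, Finset.sdiff_nonempty.mpr fun hsub => ?_⟩
  · exact hasymm a b hab (hm b a (hsub.lt_of_ne hne))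
  · exact hba (hsub.lt_of_ne hne.symm)

/-- every monotonic strict partial order on `2^O` is captured by
some (finite) CI-net: the induced relation equals the given order. -/
theorem stmt_4 (r : Finset O → Finset O → Prop)
    (hr : IsPrefRel r) (hm : Monotonic r) :
    ∃ N : Set (CIStmt O), N.Finite ∧ ∀ a b : Finset O, Induced N a b ↔ r a b := by
  refine ⟨{c | SatStmt r c}, Set.toFinite _, fun a b =>
    ⟨fun h => h r ⟨hr, hm, fun _ hc => hc⟩, fun hab r' ⟨_, hm', hsat'⟩ => ?_⟩⟩
  by_cases hba : b ⊂ a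
  · exact hm' a b hba
  obtain ⟨h1, h2⟩ := sdiff_nonempty_of_monotonic hr.2.1 hm hab hba
  exact (satStmt_ofPair_iff h1 h2).mp (hsat' _ ((satStmt_ofPair_iff h1 h2).mpr hab))
end

section
/- Any CI-net whose preference graph is acyclic is satisfiable. -/
/-!
Rank every outcome `o` by the number `ρ o` of outcomes reachable from it in the preference
graph; acyclicity makes `ρ` strictly decrease along edges. Weighting `o` by `(|O| + 1) ^ ρ o`,
a single element of `S₁` outweighs all of `S₂`, so comparing subsets by total weight is a
monotonic strict order satisfying every statement of the net.
-/

variable {O : Type*} [Fintype O] [DecidableEq O]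

/-- The preference graph of a CI-net: an edge from `o₁` to `o₂` whenever some
statement has `o₁ ∈ S₁` and `o₂ ∈ S₂`. -/
def PrefEdge (N : Set (CIStmt O)) (o1 o2 : O) : Prop :=
  ∃ c ∈ N, o1 ∈ c.s1 ∧ o2 ∈ c.s2

open Finset

theorem isPrefRel_gt_on {α β : Type*} [Preorder β] (W : α → β) :
    IsPrefRel (fun a b => W b < W a) :=
  ⟨fun _ => lt_irrefl _, fun _ _ hab hba => lt_asymm hab hba,
    fun _ _ _ hab hbc => hbc.trans hab⟩

theorem ncard_transGen_lt_of_rel {α : Type*} [Finite α] {r : α → α → Prop}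
    (hr : ∀ a, ¬ Relation.TransGen r a a) {a b : α} (hab : r a b) :
    {x | Relation.TransGen r b x}.ncard < {x | Relation.TransGen r a x}.ncard :=
  Set.ncard_lt_ncard ⟨fun _ hx => .head hab hx, fun hsub => hr b (hsub (.single hab))⟩
    (Set.toFinite _)

theorem sum_pow_lt_pow_of_card_lt {ι : Type*} {s : Finset ι} {e : ι → ℕ} {b k : ℕ}
    (hs : #s < b) (he : ∀ i ∈ s, e i < k) : ∑ i ∈ s, b ^ e i < b ^ k := by
  rcases s.eq_empty_or_nonempty with rfl | ⟨i, hi⟩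
  · simp only [sum_empty]
    exact Nat.pow_pos hs
  obtain ⟨k, rfl⟩ := Nat.exists_eq_add_one_of_ne_zero (Nat.ne_zero_of_lt (he i hi))
  calc ∑ i ∈ s, b ^ e i ≤ #s • b ^ k :=
        sum_le_card_nsmul _ _ _ fun i hi =>
          Nat.pow_le_pow_right (by omega) (Nat.lt_succ_iff.mp (he i hi))
    _ < b ^ (k + 1) := by
        rw [smul_eq_mul, pow_succ']
        exact Nat.mul_lt_mul_of_pos_right hs (Nat.pow_pos (by omega))

section Weights

variable {M : Type*} [AddCommMonoid M] [PartialOrder M] [IsOrderedCancelAddMonoid M]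

theorem CIStmt.sum_lt_sum_of_sum_lt (c : CIStmt O) {w : O → M}
    (hw : ∑ o ∈ c.s2, w o < ∑ o ∈ c.s1, w o) {S' : Finset O}
    (hS' : S' ⊆ univ \ (c.sp ∪ c.sm ∪ c.s1 ∪ c.s2)) :
    ∑ o ∈ S' ∪ c.sp ∪ c.s2, w o < ∑ o ∈ S' ∪ c.sp ∪ c.s1, w o := by
  have hS'c : Disjoint S' (c.sp ∪ c.sm ∪ c.s1 ∪ c.s2) := (subset_sdiff.mp hS').2
  have hdisj : ∀ s, Disjoint c.sp s → s ⊆ c.s1 ∪ c.s2 → Disjoint (S' ∪ c.sp) s :=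
    fun s hsp hs => disjoint_union_left.mpr
      ⟨hS'c.mono_right (hs.trans (union_subset_union subset_union_right subset_rfl)), hsp⟩
  rw [sum_union (hdisj _ c.dp1 subset_union_left), sum_union (hdisj _ c.dp2 subset_union_right)]
  exact add_lt_add_right hw _

theorem ciSatisfiable_of_weight {N : Set (CIStmt O)} (w : O → M) (hw : ∀ o, 0 < w o)
    (hN : ∀ c ∈ N, ∑ o ∈ c.s2, w o < ∑ o ∈ c.s1, w o) : CISatisfiable N := by
  refine ⟨fun a b => ∑ o ∈ b, w o < ∑ o ∈ a, w o, isPrefRel_gt_on _, ?_,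
    fun c hc _ hS' => c.sum_lt_sum_of_sum_lt (hN c hc) hS'⟩
  intro a b hba
  obtain ⟨o, hoa, hob⟩ := exists_of_ssubset hba
  exact sum_lt_sum_of_subset hba.subset hoa hob (hw o) fun o _ _ => (hw o).le

end Weights

/-- any CI-net whose preference graph is acyclic is satisfiable. -/
theorem stmt_5 (N : Set (CIStmt O))
    (h : ¬ ∃ o : O, Relation.TransGen (PrefEdge N) o o) :
    CISatisfiable N := by
  set ρ : O → ℕ := fun o => {x | Relation.TransGen (PrefEdge N) o x}.ncard
  have hρ : ∀ {o₁ o₂}, PrefEdge N o₁ o₂ → ρ o₂ < ρ o₁ :=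
    ncard_transGen_lt_of_rel (not_exists.mp h)
  set w : O → ℕ := fun o => (Fintype.card O + 1) ^ ρ o
  refine ciSatisfiable_of_weight w (fun _ => by positivity) fun c hc => ?_
  obtain ⟨o₁, ho₁⟩ := c.h1
  calc ∑ o ∈ c.s2, w o < w o₁ :=
        sum_pow_lt_pow_of_card_lt (Nat.lt_succ_of_le (card_le_univ _))
          fun o ho => hρ ⟨c, hc, ho₁, ho⟩
    _ ≤ ∑ o ∈ c.s1, w o := single_le_sum (fun _ _ => Nat.zero_le _) ho₁
end

section
/- For a satisfiable C^{ℵ0}I-net N on O and finite multisets M_a, M_b over O: M_a >_N M_b if and only if there is a finite sequence of worsening flips from M_a to M_b with respect to N. -/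
variable {O : Type*} [Fintype O] [DecidableEq O]

/-- A comparison relation symbol for multiplicity constraints. -/
inductive CRel
  | ge
  | le
  | eq

/-- A simple multiplicity constraint `o R a`. -/
structure Constraint (O : Type*) where
  obj : O
  rel : CRel
  bound : ℕ

/-- A multiset satisfies a constraint. -/
def Constraint.Holds {O : Type*} [DecidableEq O] (c : Constraint O) (M : Multiset O) : Prop :=
  match c.rel with
  | .ge => c.bound ≤ M.count c.obj
  | .le => M.count c.obj ≤ c.bound
  | .eq => M.count c.obj = c.bound

/-- A `C^{ℵ₀}I`-statement `P⁺ : P₁ ▷ P₂`: a finite conjunction of constraints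
as precondition and two update patterns (nonzero multisets with disjoint
supports). -/
structure CAIStmt (O : Type*) where
  pre : List (Constraint O)
  p1 : Multiset O
  p2 : Multiset O
  h1 : p1 ≠ 0
  h2 : p2 ≠ 0
  hd : ∀ a ∈ p1, a ∉ p2

/-- A multiset satisfies the precondition of a statement. -/
def SatPre {O : Type*} [DecidableEq O] (M : Multiset O) (c : CAIStmt O) : Prop :=
  ∀ con ∈ c.pre, con.Holds M

/-- Monotonicity on finite multisets over `O`. -/
def MonotonicM {O : Type*} (r : Multiset O → Multiset O → Prop) : Prop :=
  ∀ a b : Multiset O, b < a → r a b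

/-- `r` satisfies a `C^{ℵ₀}I`-statement. -/
def SatCAIStmt {O : Type*} [DecidableEq O] (r : Multiset O → Multiset O → Prop)
    (c : CAIStmt O) : Prop :=
  ∀ M' : Multiset O, SatPre M' c → r (M' + c.p1) (M' + c.p2)

/-- `r` satisfies a `C^{ℵ₀}I`-net. -/
def SatCAINet {O : Type*} [DecidableEq O] (r : Multiset O → Multiset O → Prop)
    (N : Set (CAIStmt O)) : Prop :=
  MonotonicM r ∧ ∀ c ∈ N, SatCAIStmt r c

/-- Satisfiability of a `C^{ℵ₀}I`-net. -/
def CAISatisfiable {O : Type*} [DecidableEq O] (N : Set (CAIStmt O)) : Prop :=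
  ∃ r : Multiset O → Multiset O → Prop, IsPrefRel r ∧ SatCAINet r N

/-- CI-flip for a `C^{ℵ₀}I`-net. -/
def CAIFlipCI {O : Type*} [DecidableEq O] (N : Set (CAIStmt O))
    (a b : Multiset O) : Prop :=
  ∃ c ∈ N, ∃ M' : Multiset O, SatPre M' c ∧ a = M' + c.p1 ∧ b = M' + c.p2

/-- Worsening flip for a `C^{ℵ₀}I`-net. -/
def CAIWFlip {O : Type*} [DecidableEq O] (N : Set (CAIStmt O))
    (a b : Multiset O) : Prop :=
  b < a ∨ CAIFlipCI N a b

/-- The intersection of all preference relations satisfying `N`. -/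
def CAIInduced {O : Type*} [DecidableEq O] (N : Set (CAIStmt O))
    (a b : Multiset O) : Prop :=
  ∀ r : Multiset O → Multiset O → Prop, IsPrefRel r ∧ SatCAINet r N → r a b

/-- A worsening flip confined to the multiset `M`. -/
def ConfFlip {O : Type*} [DecidableEq O] (N : Set (CAIStmt O)) (M : Multiset O)
    (a b : Multiset O) : Prop :=
  CAIWFlip N a b ∧ a ≤ M ∧ b ≤ M

/-!
A worsening flip is exactly one instance of a defining condition of `>_N` (monotonicity or a
statement of `N`), so every transitive relation satisfying `N` contains the transitive closure
of the flips. Conversely, that closure satisfies `N` and is transitive by construction, and it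
is irreflexive and asymmetric because it is contained in the strict order witnessing
satisfiability. Hence it is the least preference relation satisfying `N`, i.e. `>_N` itself.
-/

theorem IsPrefRel.of_le {α : Type*} {r s : α → α → Prop} (hs : IsPrefRel s)
    (hrs : ∀ a b, r a b → s a b) (htrans : ∀ a b c, r a b → r b c → r a c) : IsPrefRel r :=
  ⟨fun a hr => hs.1 a (hrs a a hr),
    fun a b hab hba => hs.2.1 a b (hrs a b hab) (hrs b a hba),
    htrans⟩

section

variable {O : Type*} [DecidableEq O] {N : Set (CAIStmt O)}

theorem SatCAINet.of_cAIWFlip {r : Multiset O → Multiset O → Prop} (hr : SatCAINet r N)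
    {a b : Multiset O} (hab : CAIWFlip N a b) : r a b := by
  rcases hab with hlt | ⟨c, hc, M', hpre, rfl, rfl⟩
  · exact hr.1 a b hlt
  · exact hr.2 c hc M' hpre

theorem SatCAINet.of_transGen_cAIWFlip {r : Multiset O → Multiset O → Prop}
    (htrans : ∀ a b c, r a b → r b c → r a c) (hr : SatCAINet r N) {a b : Multiset O}
    (hab : Relation.TransGen (CAIWFlip N) a b) : r a b := by
  induction hab with
  | single hstep => exact hr.of_cAIWFlip hstep
  | tail _ hstep ih => exact htrans _ _ _ ih (hr.of_cAIWFlip hstep)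

theorem satCAINet_transGen_cAIWFlip : SatCAINet (Relation.TransGen (CAIWFlip N)) N :=
  ⟨fun _ _ hlt => .single (.inl hlt),
    fun c hc M' hpre => .single (.inr ⟨c, hc, M', hpre, rfl, rfl⟩)⟩

theorem CAISatisfiable.isPrefRel_transGen_cAIWFlip (h : CAISatisfiable N) :
    IsPrefRel (Relation.TransGen (CAIWFlip N)) := by
  obtain ⟨r, hr, hsat⟩ := h
  exact hr.of_le (fun _ _ => hsat.of_transGen_cAIWFlip hr.2.2)
    fun _ _ _ => Relation.TransGen.trans

end

theorem stmt_7_general (N : Set (CAIStmt O)) (h : CAISatisfiable N)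
    (Ma Mb : Multiset O) :
    CAIInduced N Ma Mb ↔ Relation.TransGen (CAIWFlip N) Ma Mb :=
  ⟨fun hind => hind _ ⟨h.isPrefRel_transGen_cAIWFlip, satCAINet_transGen_cAIWFlip⟩,
    fun hab _ ⟨hr, hsat⟩ => hsat.of_transGen_cAIWFlip hr.2.2 hab⟩

/-- for a satisfiable `C^{ℵ₀}I`-net, the induced relation
coincides with reachability by finite sequences of worsening flips. -/
theorem stmt_7 (N : Set (CAIStmt O)) (hfin : N.Finite) (h : CAISatisfiable N)
    (Ma Mb : Multiset O) :
    CAIInduced N Ma Mb ↔ Relation.TransGen (CAIWFlip N) Ma Mb :=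
  stmt_7_general N h Ma Mb
end

section
/- For any C^{ℵ0}I-net N and finite multisets M_a, M_b over O: there is a sequence of worsening flips from M_a to M_b with respect to N if and only if there is some finite multiset M such that there is a sequence of worsening flips from M_a to M_b confined to M (i.e., every multiset in the sequence is a sub-multiset of M). -/
variable {O : Type*} [Fintype O] [DecidableEq O]

lemma transGen_last {α : Type*} {r : α → α → Prop} {p : α → Prop}
    (hp : ∀ x y, r x y → p y) {a b : α} (h : Relation.TransGen r a b) : p b := by
  induction h with
  | single h => exact hp _ _ h
  | tail _ h _ => exact hp _ _ h

/-- there is a sequence of worsening flips from `Ma` to `Mb` iff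
there is one confined to some finite multiset `M`. -/
theorem stmt_8 (N : Set (CAIStmt O)) (Ma Mb : Multiset O) :
    Relation.TransGen (CAIWFlip N) Ma Mb ↔
      ∃ M : Multiset O, Relation.TransGen (ConfFlip N M) Ma Mb := by
  constructor
  · intro h
    induction h with
    | single hab =>
      rename_i b
      exact ⟨Ma ⊔ b, .single ⟨hab, le_sup_left, le_sup_right⟩⟩
    | tail _ hbc ih =>
      obtain ⟨M, hM⟩ := ih
      rename_i b c _
      refine ⟨M ⊔ c, .tail (Relation.TransGen.mono ?_ _ _ hM) ⟨hbc, le_trans ?_ le_sup_left, le_sup_right⟩⟩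
      · intro x y ⟨h1, h2, h3⟩
        exact ⟨h1, le_trans h2 le_sup_left, le_trans h3 le_sup_left⟩
      · exact transGen_last (p := fun x => x ≤ M) (fun _ _ h => h.2.2) hM
  · rintro ⟨M, hM⟩
    exact Relation.TransGen.mono (fun x y h => h.1) _ _ hM
end

section
/- A C^{ℵ0}I-net N is satisfiable if and only if for every finite multiset M over O there is no multiset M_a ⊆ M with a nonempty sequence of worsening flips from M_a back to M_a confined to M. -/
variable {O : Type*} [Fintype O] [DecidableEq O]

lemma confFlip_mono {O : Type*} [DecidableEq O] {N : Set (CAIStmt O)}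
    {M M' a b : Multiset O} (hMM : M ≤ M') (h : ConfFlip N M a b) :
    ConfFlip N M' a b :=
  ⟨h.1, h.2.1.trans hMM, h.2.2.trans hMM⟩

lemma wflip_bound {O : Type*} [DecidableEq O] {N : Set (CAIStmt O)}
    {a b : Multiset O} (h : Relation.TransGen (CAIWFlip N) a b) :
    ∃ M, a ≤ M ∧ b ≤ M ∧ Relation.TransGen (ConfFlip N M) a b := by
  induction h with
  | single h =>
    exact ⟨_ ⊔ _, le_sup_left, le_sup_right,
      .single ⟨h, le_sup_left, le_sup_right⟩⟩
  | @tail b c _ hbc ih =>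
    obtain ⟨M, haM, hbM, hconf⟩ := ih
    exact ⟨M ⊔ c, haM.trans le_sup_left, le_sup_right,
      (Relation.TransGen.mono (fun _ _ => confFlip_mono le_sup_left) _ _ hconf).tail
        ⟨hbc, hbM.trans le_sup_left, le_sup_right⟩⟩

/-- a `C^{ℵ₀}I`-net is satisfiable iff it is c-consistent with
respect to every finite multiset `M`, i.e. no nonempty confined cycle of
worsening flips exists. -/
theorem stmt_9 (N : Set (CAIStmt O)) (hfin : N.Finite) :
    CAISatisfiable N ↔
      ∀ M : Multiset O, ¬ ∃ Ma : Multiset O, Ma ≤ M ∧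
        Relation.TransGen (ConfFlip N M) Ma Ma := by
  constructor
  · rintro ⟨r, ⟨hirr, _, htrans⟩, hmono, hsat⟩ M ⟨Ma, _, hcyc⟩
    have step : ∀ a b : Multiset O, CAIWFlip N a b → r a b := by
      rintro a b (hlt | ⟨c, hc, M', hpre, rfl, rfl⟩)
      · exact hmono _ _ hlt
      · exact hsat c hc M' hpre
    have key : ∀ a b : Multiset O, Relation.TransGen (ConfFlip N M) a b → r a b := by
      intro a b h
      induction h with
      | single h => exact step _ _ h.1
      | tail _ hstep ih => exact htrans _ _ _ ih (step _ _ hstep.1)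
    exact hirr _ (key _ _ hcyc)
  · intro hcons
    have hirr : ∀ a, ¬ Relation.TransGen (CAIWFlip N) a a := by
      intro a ha
      obtain ⟨M, haM, _, hconf⟩ := wflip_bound ha
      exact hcons M ⟨a, haM, hconf⟩
    refine ⟨Relation.TransGen (CAIWFlip N), ⟨hirr, ?_, fun a b c hab hbc => hab.trans hbc⟩,
      fun a b hlt => .single (Or.inl hlt), fun c hc M' hpre => .single (Or.inr ⟨c, hc, M', hpre, rfl, rfl⟩)⟩
    exact fun a b hab hba => hirr a (hab.trans hba)
end

section
/- Given a CI-statement c = S^+,S^-:S_1▷S_2 on O, let ĉ be the C^{ℵ0}I-statement with precondition asserting multiplicity = 1 for each element of S^+, = 0 for each element of S^- ∪ S_1 ∪ S_2, and ≤ 1 for all remaining elements of O, and comparison adding 1 copy of each element of S_1 versus 1 copy of each element of S_2. Then for any CI-net N, the CI-flips of N on subsets of O coincide exactly with the CI-flips of the translated net N̂ = {ĉ : c ∈ N} restricted to multisets that are sets (all multiplicities ≤ 1). -/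
/-!
The precondition of `ĉ` bounds every multiplicity by one, forces it to be one on `S⁺` and
zero on `S⁻ ∪ S₁ ∪ S₂`. Hence the multisets satisfying it are exactly the sets `S' ∪ S⁺` with
`S'` disjoint from `S⁺ ∪ S⁻ ∪ S₁ ∪ S₂`, and adding the pattern `S₁` (or `S₂`) to such a set
gives the disjoint union `S' ∪ S⁺ ∪ S₁` (or `S' ∪ S⁺ ∪ S₂`), which is the CI-flip of `c`.
-/

variable {O : Type*} [Fintype O] [DecidableEq O]

/-- The translation `ĉ` of a CI-statement: multiplicity `= 1` for elements of
`S⁺`, `= 0` for elements of `S⁻ ∪ S₁ ∪ S₂`, `≤ 1` for all remaining elements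
of `O`, and the comparison adds one copy of each element of `S₁` versus one
copy of each element of `S₂`. -/
noncomputable def hatStmt (c : CIStmt O) : CAIStmt O where
  pre := (Finset.univ : Finset O).toList.map fun o =>
    if o ∈ c.sp then ⟨o, CRel.eq, 1⟩
    else if o ∈ c.sm ∪ c.s1 ∪ c.s2 then ⟨o, CRel.eq, 0⟩
    else ⟨o, CRel.le, 1⟩
  p1 := c.s1.val
  p2 := c.s2.val
  h1 := by simpa [Finset.val_eq_zero] using c.h1.ne_empty
  h2 := by simpa [Finset.val_eq_zero] using c.h2.ne_empty
  hd := fun a ha hb =>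
    Finset.disjoint_left.mp c.d12 (Finset.mem_val.mp ha) (Finset.mem_val.mp hb)

theorem Finset.val_add_val_of_disjoint {α : Type*} [DecidableEq α] {s t : Finset α}
    (h : Disjoint s t) : s.val + t.val = (s ∪ t).val := by
  rw [← Finset.disjUnion_eq_union s t h]
  rfl

namespace CIStmt

variable (c : CIStmt O)

theorem satPre_hatStmt_iff (M : Multiset O) :
    SatPre M (hatStmt c) ↔ ∀ o, if o ∈ c.sp then M.count o = 1
      else if o ∈ c.sm ∪ c.s1 ∪ c.s2 then M.count o = 0 else M.count o ≤ 1 := by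
  simp only [SatPre, hatStmt, List.forall_mem_map, Finset.mem_toList, Finset.mem_univ,
    forall_const]
  refine forall_congr' fun o => ?_
  split_ifs <;> rfl

theorem satPre_hatStmt_iff_exists (M : Multiset O) :
    SatPre M (hatStmt c) ↔
      ∃ S' ⊆ Finset.univ \ (c.sp ∪ c.sm ∪ c.s1 ∪ c.s2), M = (S' ∪ c.sp).val := by
  rw [satPre_hatStmt_iff]
  constructor
  · intro h
    have hcount_le : ∀ o, M.count o ≤ 1 := fun o => by
      have := h o
      split_ifs at this <;> omega
    refine ⟨M.toFinset \ c.sp, fun o ho => ?_, ?_⟩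
    · have := h o
      simp only [Finset.mem_sdiff, Finset.mem_univ, true_and, Multiset.mem_toFinset,
        ← Multiset.count_pos] at ho ⊢
      split_ifs at this <;> grind
    · have hsp : c.sp ⊆ M.toFinset := fun o ho => by
        have := h o
        rw [if_pos ho] at this
        simp [← Multiset.count_pos, this]
      rw [Finset.sdiff_union_of_subset hsp, Multiset.toFinset_val,
        Multiset.dedup_eq_self.mpr (Multiset.nodup_iff_count_le_one.mpr hcount_le)]
  · rintro ⟨S', hS', rfl⟩ o
    have hS'o : o ∈ S' → o ∉ c.sp ∪ c.sm ∪ c.s1 ∪ c.s2 := fun h =>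
      (Finset.mem_sdiff.mp (hS' h)).2
    rw [Multiset.count_eq_of_nodup (S' ∪ c.sp).nodup]
    split_ifs <;> grind

theorem disjoint_union_sp_of_subset {S' : Finset O}
    (hS' : S' ⊆ Finset.univ \ (c.sp ∪ c.sm ∪ c.s1 ∪ c.s2)) :
    Disjoint (S' ∪ c.sp) (c.s1 ∪ c.s2) := by
  refine Finset.disjoint_union_left.mpr ⟨?_, Finset.disjoint_union_right.mpr ⟨c.dp1, c.dp2⟩⟩
  refine (Finset.subset_sdiff.mp hS').2.mono_right fun o ho => ?_
  simp only [Finset.mem_union] at ho ⊢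
  tauto

theorem union_sp_val_add_hatStmt_p1 {S' : Finset O}
    (hS' : S' ⊆ Finset.univ \ (c.sp ∪ c.sm ∪ c.s1 ∪ c.s2)) :
    (S' ∪ c.sp).val + (hatStmt c).p1 = (S' ∪ c.sp ∪ c.s1).val :=
  Finset.val_add_val_of_disjoint
    ((c.disjoint_union_sp_of_subset hS').mono_right Finset.subset_union_left)

theorem union_sp_val_add_hatStmt_p2 {S' : Finset O}
    (hS' : S' ⊆ Finset.univ \ (c.sp ∪ c.sm ∪ c.s1 ∪ c.s2)) :
    (S' ∪ c.sp).val + (hatStmt c).p2 = (S' ∪ c.sp ∪ c.s2).val :=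
  Finset.val_add_val_of_disjoint
    ((c.disjoint_union_sp_of_subset hS').mono_right Finset.subset_union_right)

end CIStmt

/-- the CI-flips of a CI-net `N` on subsets of `O` coincide
exactly with the CI-flips of the translated net `N̂ = {ĉ : c ∈ N}` restricted
to multisets that are sets. -/
theorem stmt_10 (N : Set (CIStmt O)) (Sa Sb : Finset O) :
    CIFlip N Sa Sb ↔ CAIFlipCI (hatStmt '' N) Sa.val Sb.val := by
  simp only [CIFlip, CAIFlipCI, Set.exists_mem_image, CIStmt.satPre_hatStmt_iff_exists]
  refine exists_congr fun c => and_congr_right fun _ => ?_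
  constructor
  · rintro ⟨S', hS', rfl, rfl⟩
    exact ⟨_, ⟨S', hS', rfl⟩, (c.union_sp_val_add_hatStmt_p1 hS').symm,
      (c.union_sp_val_add_hatStmt_p2 hS').symm⟩
  · rintro ⟨_, ⟨S', hS', rfl⟩, ha, hb⟩
    exact ⟨S', hS', Finset.val_injective (ha.trans (c.union_sp_val_add_hatStmt_p1 hS')),
      Finset.val_injective (hb.trans (c.union_sp_val_add_hatStmt_p2 hS'))⟩
end

section
/- For a satisfiable C^m I-net N on a finite multiset M, and M_a, M_b ⊆ M: M_a >_N M_b if and only if there is a sequence of worsening flips from M_a to M_b with respect to N. -/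
variable {O : Type*} [DecidableEq O]

/-- A `CᵐI`-statement `M⁺, M⁻ : M₁ ▷ M₂` on the finite multiset `M`. -/
structure CmIStmt (O : Type*) [DecidableEq O] (M : Multiset O) where
  mp : Multiset O
  mm : Multiset O
  m1 : Multiset O
  m2 : Multiset O
  hp : mp ≤ M
  hm : mm ≤ M - mp
  h1 : m1 ≤ M - (mp + mm)
  h2 : m2 ≤ M - (mp + mm)
  n1 : m1 ≠ 0
  n2 : m2 ≠ 0
  d12 : m1 ∩ m2 = 0

/-- `r` satisfies a `CᵐI`-statement. -/
def SatCmStmt (M : Multiset O) (r : Multiset O → Multiset O → Prop)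
    (c : CmIStmt O M) : Prop :=
  ∀ M' ≤ M - (c.mp + c.mm + c.m1 + c.m2),
    r (M' + c.mp + c.m1) (M' + c.mp + c.m2)

/-- Monotonicity on sub-multisets of `M`. -/
def MonotonicOn (M : Multiset O) (r : Multiset O → Multiset O → Prop) : Prop :=
  ∀ a b : Multiset O, a ≤ M → b < a → r a b

/-- Strict-partial-order conditions restricted to sub-multisets of `M`. -/
def IsPrefRelOn (M : Multiset O) (r : Multiset O → Multiset O → Prop) : Prop :=
  (∀ a, a ≤ M → ¬ r a a) ∧
  (∀ a b, a ≤ M → b ≤ M → r a b → ¬ r b a) ∧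
  (∀ a b c, a ≤ M → b ≤ M → c ≤ M → r a b → r b c → r a c)

/-- `r` satisfies a `CᵐI`-net. -/
def SatCmNet (M : Multiset O) (r : Multiset O → Multiset O → Prop)
    (N : Set (CmIStmt O M)) : Prop :=
  MonotonicOn M r ∧ ∀ c ∈ N, SatCmStmt M r c

/-- Satisfiability of a `CᵐI`-net. -/
def CmSatisfiable (M : Multiset O) (N : Set (CmIStmt O M)) : Prop :=
  ∃ r : Multiset O → Multiset O → Prop, IsPrefRelOn M r ∧ SatCmNet M r N

/-- CI-flip with respect to a single `CᵐI`-statement. -/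
def CmFlipStmt (M : Multiset O) (c : CmIStmt O M) (a b : Multiset O) : Prop :=
  ∃ M' ≤ M - (c.mp + c.mm + c.m1 + c.m2),
    a = M' + c.mp + c.m1 ∧ b = M' + c.mp + c.m2

/-- Worsening flip for a `CᵐI`-net: a `⊃`-flip within `M` or a CI-flip. -/
def CmWFlip (M : Multiset O) (N : Set (CmIStmt O M)) (a b : Multiset O) : Prop :=
  (b < a ∧ a ≤ M) ∨ ∃ c ∈ N, CmFlipStmt M c a b

/-- The intersection of all preference relations satisfying `N`. -/
def CmInduced (M : Multiset O) (N : Set (CmIStmt O M)) (a b : Multiset O) : Prop :=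
  ∀ r : Multiset O → Multiset O → Prop, IsPrefRelOn M r ∧ SatCmNet M r N → r a b

/-!
Every flip is an instance of monotonicity or of a statement of `N`, and all flips stay among
the sub-multisets of `M`, where a satisfying order is transitive; hence each such order contains
the transitive closure of the flips. Conversely, that closure is itself monotonic, satisfies `N`
and is transitive, and it is irreflexive because it lies inside some satisfying strict order,
which exists by satisfiability. So it is the smallest satisfying order.
-/

namespace CmIStmt

variable {M : Multiset O}

theorem sum_le (c : CmIStmt O M) : c.mp + c.mm + c.m1 + c.m2 ≤ M := by
  have hpm : c.mp + c.mm ≤ M := (le_tsub_iff_left c.hp).mp c.hm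
  have h12 : c.m1 + c.m2 ≤ M - (c.mp + c.mm) := by
    rw [← Multiset.union_add_inter, c.d12, add_zero]
    exact Multiset.union_le c.h1 c.h2
  rw [add_assoc]
  exact (le_tsub_iff_left hpm).mp h12

end CmIStmt

section Flips

variable {M : Multiset O} {N : Set (CmIStmt O M)} {r : Multiset O → Multiset O → Prop}
  {a b : Multiset O}

theorem CmFlipStmt.left_le_and_right_le {c : CmIStmt O M} (h : CmFlipStmt M c a b) :
    a ≤ M ∧ b ≤ M := by
  obtain ⟨M', hM', rfl, rfl⟩ := h
  have hk : M' + (c.mp + c.mm + c.m1 + c.m2) ≤ M := (le_tsub_iff_right c.sum_le).mp hM'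
  constructor <;> refine le_trans ?_ hk <;>
    simp only [Multiset.le_iff_count, Multiset.count_add] <;> intro o <;> omega

theorem CmWFlip.left_le_and_right_le (h : CmWFlip M N a b) : a ≤ M ∧ b ≤ M := by
  rcases h with ⟨hba, haM⟩ | ⟨c, -, hc⟩
  · exact ⟨haM, hba.le.trans haM⟩
  · exact hc.left_le_and_right_le

theorem CmWFlip.rel (hr : SatCmNet M r N) (h : CmWFlip M N a b) : r a b := by
  rcases h with ⟨hba, haM⟩ | ⟨c, hc, M', hM', rfl, rfl⟩
  · exact hr.1 a b haM hba
  · exact hr.2 c hc M' hM'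

theorem CmWFlip.transGen_left_le (h : Relation.TransGen (CmWFlip M N) a b) : a ≤ M := by
  obtain ⟨_, hflip, -⟩ := Relation.TransGen.head'_iff.mp h
  exact hflip.left_le_and_right_le.1

theorem CmWFlip.transGen_rel (hpr : IsPrefRelOn M r) (hr : SatCmNet M r N)
    (h : Relation.TransGen (CmWFlip M N) a b) : r a b := by
  induction h with
  | single hflip => exact hflip.rel hr
  | tail hab hflip ih =>
    obtain ⟨hbM, hcM⟩ := hflip.left_le_and_right_le
    exact hpr.2.2 _ _ _ (transGen_left_le hab) hbM hcM ih (hflip.rel hr)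

theorem satCmNet_transGen_cmWFlip : SatCmNet M (Relation.TransGen (CmWFlip M N)) N :=
  ⟨fun _ _ haM hba => .single (.inl ⟨hba, haM⟩),
    fun c hc M' hM' => .single (.inr ⟨c, hc, M', hM', rfl, rfl⟩)⟩

theorem CmSatisfiable.isPrefRelOn_transGen_cmWFlip (h : CmSatisfiable M N) :
    IsPrefRelOn M (Relation.TransGen (CmWFlip M N)) := by
  obtain ⟨r, hpr, hr⟩ := h
  have irrefl : ∀ a, ¬ Relation.TransGen (CmWFlip M N) a a := fun a haa =>
    hpr.1 a (CmWFlip.transGen_left_le haa) (CmWFlip.transGen_rel hpr hr haa)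
  exact ⟨fun a _ => irrefl a, fun a _ _ _ hab hba => irrefl a (hab.trans hba),
    fun _ _ _ _ _ _ hab hbc => hab.trans hbc⟩

end Flips

theorem stmt_11_general (M : Multiset O) (N : Set (CmIStmt O M))
    (h : CmSatisfiable M N) (Ma Mb : Multiset O) :
    CmInduced M N Ma Mb ↔ Relation.TransGen (CmWFlip M N) Ma Mb :=
  ⟨fun hind => hind _ ⟨h.isPrefRelOn_transGen_cmWFlip, satCmNet_transGen_cmWFlip⟩,
    fun hflips _ ⟨hpr, hr⟩ => CmWFlip.transGen_rel hpr hr hflips⟩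

/-- for a satisfiable `CᵐI`-net on `M` and sub-multisets
`Ma, Mb ⊆ M`, the induced relation coincides with reachability by sequences of
worsening flips. -/
theorem stmt_11 (M : Multiset O) (N : Set (CmIStmt O M))
    (h : CmSatisfiable M N) (Ma Mb : Multiset O) (ha : Ma ≤ M) (hb : Mb ≤ M) :
    CmInduced M N Ma Mb ↔ Relation.TransGen (CmWFlip M N) Ma Mb :=
  stmt_11_general M N h Ma Mb
end

section
/- Let M be a finite multiset on O, S_M = ⋃_{o∈O} {o_1,...,o_{m_M(o)}} the set of indexed copies, and for M' ⊆ M let ss(M') = {S ⊆ S_M : |S ∩ {o_1,...,o_{m_M(o)}}| = m_{M'}(o) for every o}. Define the relation >_i on subsets of S_M as the transitive closure of {(S_1, S_2) : (S_1 ∪ S_2) \ (S_1 ∩ S_2) = {o_i, o_j} with o_i ∈ S_1, o_j ∈ S_2, j = i+1}. Then for every M' ⊆ M, the set ⋃_{o} {o_1,...,o_{m_{M'}(o)}} is the unique maximal element of ss(M') with respect to >_i. -/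
variable {O : Type*} [DecidableEq O]

variable [Fintype O]

/-- The set of indexed copies `{(o, i) : 1 ≤ i ≤ m_M(o)}`. -/
def SMset (M : Multiset O) : Finset (O × ℕ) :=
  Finset.univ.biUnion fun o : O => (Finset.Icc 1 (M.count o)).image fun i => (o, i)

/-- The block of indexed copies `{o_a, ..., o_b}` of `o`. -/
def block (o : O) (a b : ℕ) : Finset (O × ℕ) :=
  (Finset.Icc a b).image fun i => (o, i)

/-- `S ∈ ss(M')`: `S ⊆ S_M` and for every `o`, `S` has exactly `m_{M'}(o)`
indexed copies of `o`. -/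
def InSS (M M' : Multiset O) (S : Finset (O × ℕ)) : Prop :=
  S ⊆ SMset M ∧ ∀ o : O, (S.filter fun p => p.1 = o).card = M'.count o

/-- `overline{M'} = ⋃_o {o_1, ..., o_{m_{M'}(o)}}`. -/
def ovl (M' : Multiset O) : Finset (O × ℕ) :=
  Finset.univ.biUnion fun o : O => block o 1 (M'.count o)

/-- One step of the index-shifting order `>_i` on subsets of `S_M`: the
symmetric difference is `{o_i, o_{i+1}}` with `o_i ∈ S₁`, `o_{i+1} ∈ S₂`. -/
def IStep (M : Multiset O) (S1 S2 : Finset (O × ℕ)) : Prop :=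
  S1 ⊆ SMset M ∧ S2 ⊆ SMset M ∧
    ∃ (o : O) (i : ℕ), (S1 ∪ S2) \ (S1 ∩ S2) = {(o, i), (o, i + 1)} ∧
      (o, i) ∈ S1 ∧ (o, i + 1) ∈ S2

/-! The index sum `∑ (o, i) ∈ S, i` goes up by exactly one along each step of `>_i`, so `>_i` is
a strict order. If `S ∈ ss(M')` differs from `overline{M'}`, some copy `o_{i+1} ∈ S` has
`o_i ∉ S`; replacing `o_{i+1}` by `o_i` gives an element of `ss(M')` one step below `S`.
Descending on the index sum therefore reaches `overline{M'}` from every element of `ss(M')`. -/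

open Finset Relation

theorem union_sdiff_inter_eq_pair_iff {α : Type*} [DecidableEq α] {s t : Finset α} {a b : α}
    (hab : a ≠ b) :
    ((s ∪ t) \ (s ∩ t) = {a, b} ∧ a ∈ s ∧ b ∈ t) ↔
      (b ∈ t ∧ a ∉ t ∧ s = insert a (t.erase b)) := by
  constructor
  · rintro ⟨h, ha, hb⟩
    have hmem : ∀ p, (p ∈ s ∪ t ∧ p ∉ s ∩ t) ↔ (p = a ∨ p = b) := fun p => by
      rw [← mem_sdiff, h, mem_insert, mem_singleton]
    refine ⟨hb, fun hat => ?_, ?_⟩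
    · simpa [ha, hat] using (hmem a).2 (Or.inl rfl)
    · ext p
      have := hmem p
      simp only [mem_union, mem_inter, mem_insert, mem_erase] at this ⊢
      grind
  · rintro ⟨hb, hat, rfl⟩
    refine ⟨?_, mem_insert_self a _, hb⟩
    ext p
    simp only [mem_sdiff, mem_union, mem_inter, mem_insert, mem_erase, mem_singleton]
    grind

theorem card_filter_insert_erase {α : Type*} [DecidableEq α] {s : Finset α} {a b : α}
    (p : α → Prop) [DecidablePred p] (ha : a ∉ s) (hb : b ∈ s) (hp : p a ↔ p b) :
    #((insert a (s.erase b)).filter p) = #(s.filter p) := by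
  rw [filter_insert, filter_erase]
  split_ifs with hpa
  · have hbf : b ∈ s.filter p := mem_filter.2 ⟨hb, hp.1 hpa⟩
    rw [card_insert_of_notMem (by simp [ha]), card_erase_add_one hbf]
  · rw [erase_eq_of_notMem (by simp [← hp, hpa])]

theorem eq_Icc_one_card_of_pred_mem {T : Finset ℕ} (h0 : 0 ∉ T)
    (hpred : ∀ i, 1 ≤ i → i + 1 ∈ T → i ∈ T) : T = Icc 1 #T := by
  have hIcc : ∀ j ∈ T, Icc 1 j ⊆ T := by
    intro j
    induction j with
    | zero => simp
    | succ j ih =>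
      intro hj k hk
      rcases (mem_Icc.1 hk).2.lt_or_eq with hlt | rfl
      · exact ih (hpred j (by grind) hj) (mem_Icc.2 ⟨(mem_Icc.1 hk).1, by omega⟩)
      · exact hj
  have hsub : T ⊆ Icc 1 #T := fun j hj => mem_Icc.2
    ⟨Nat.one_le_iff_ne_zero.2 (ne_of_mem_of_not_mem hj h0),
      by simpa using card_le_card (hIcc j hj)⟩
  exact eq_of_subset_of_card_le hsub (by simp)

section Fiber

variable {α : Type*} [DecidableEq α]

def fiber (S : Finset (α × ℕ)) (o : α) : Finset ℕ :=
  (S.filter fun p => p.1 = o).image Prod.snd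

@[simp]
theorem mem_fiber {S : Finset (α × ℕ)} {o : α} {k : ℕ} :
    k ∈ fiber S o ↔ (o, k) ∈ S := by
  simp [fiber]

theorem card_fiber (S : Finset (α × ℕ)) (o : α) :
    #(fiber S o) = #(S.filter fun p => p.1 = o) :=
  card_image_of_injOn fun _ hp _ hq hpq =>
    Prod.ext ((mem_filter.1 hp).2.trans (mem_filter.1 hq).2.symm) hpq

end Fiber

def indexSum {α : Type*} (S : Finset (α × ℕ)) : ℕ := ∑ p ∈ S, p.2

variable {M M' : Multiset O} {S S₁ S₂ : Finset (O × ℕ)}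

@[simp]
theorem mem_SMset {o : O} {i : ℕ} : (o, i) ∈ SMset M ↔ 1 ≤ i ∧ i ≤ M.count o := by
  simp [SMset]

@[simp]
theorem mem_ovl {o : O} {i : ℕ} : (o, i) ∈ ovl M' ↔ 1 ≤ i ∧ i ≤ M'.count o := by
  simp [ovl, block]

theorem inSS_ovl (h : M' ≤ M) : InSS M M' (ovl M') := by
  refine ⟨fun ⟨o, i⟩ hi => ?_, fun o => ?_⟩
  · rw [mem_ovl] at hi
    exact mem_SMset.2 ⟨hi.1, hi.2.trans (Multiset.le_iff_count.1 h o)⟩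
  · have hfiber : fiber (ovl M') o = Icc 1 (M'.count o) := by ext; simp
    rw [← card_fiber, hfiber, Nat.card_Icc, Nat.add_sub_cancel]

theorem IStep.indexSum_eq (h : IStep M S₁ S₂) : indexSum S₂ = indexSum S₁ + 1 := by
  obtain ⟨-, -, o, i, hsymm, h₁, h₂⟩ := h
  obtain ⟨-, hnot, rfl⟩ := (union_sdiff_inter_eq_pair_iff (by simp)).1 ⟨hsymm, h₁, h₂⟩
  rw [indexSum, indexSum, sum_insert fun hm => hnot (mem_of_mem_erase hm),
    ← add_sum_erase S₂ Prod.snd h₂]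
  omega

theorem indexSum_lt_of_transGen (h : TransGen (IStep M) S₁ S₂) :
    indexSum S₁ < indexSum S₂ := by
  induction h with
  | single h => rw [h.indexSum_eq]; omega
  | tail _ h ih => rw [h.indexSum_eq]; omega

theorem exists_iStep_of_gap (hS : InSS M M' S) {o : O} {i : ℕ} (hi : 1 ≤ i)
    (hout : (o, i) ∉ S) (hin : (o, i + 1) ∈ S) : ∃ S', InSS M M' S' ∧ IStep M S' S := by
  have hsub : insert (o, i) (S.erase (o, i + 1)) ⊆ SMset M := by
    refine insert_subset (mem_SMset.2 ⟨hi, ?_⟩) ((erase_subset _ _).trans hS.1)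
    have := (mem_SMset.1 (hS.1 hin)).2
    omega
  refine ⟨_, ⟨hsub, fun o' => ?_⟩, hsub, hS.1, o, i, ?_⟩
  · rw [card_filter_insert_erase _ hout hin Iff.rfl, hS.2 o']
  · exact (union_sdiff_inter_eq_pair_iff (by simp)).2 ⟨hin, hout, rfl⟩

theorem eq_ovl_of_forall_pred_mem (hS : InSS M M' S)
    (hpred : ∀ o i, 1 ≤ i → (o, i + 1) ∈ S → (o, i) ∈ S) : S = ovl M' := by
  ext ⟨o, j⟩
  have h0 : 0 ∉ fiber S o := fun h => by simpa using hS.1 (mem_fiber.1 h)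
  have hfiber := eq_Icc_one_card_of_pred_mem h0 fun i hi h =>
    mem_fiber.2 (hpred o i hi (mem_fiber.1 h))
  rw [card_fiber, hS.2 o] at hfiber
  rw [← mem_fiber, hfiber, mem_Icc, mem_ovl]

theorem reflTransGen_ovl (hS : InSS M M' S) : ReflTransGen (IStep M) (ovl M') S := by
  induction hn : indexSum S using Nat.strong_induction_on generalizing S with
  | _ n ih =>
    by_cases hpred : ∀ o i, 1 ≤ i → (o, i + 1) ∈ S → (o, i) ∈ S
    · rw [eq_ovl_of_forall_pred_mem hS hpred]
    · push Not at hpred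
      obtain ⟨o, i, hi, hin, hout⟩ := hpred
      obtain ⟨S', hS', hstep⟩ := exists_iStep_of_gap hS hi hout hin
      exact (ih _ (by rw [← hn, hstep.indexSum_eq]; omega) hS' rfl).tail hstep

/-- for every `M' ⊆ M`, `overline{M'}` is the unique maximal
element of `ss(M')` with respect to `>_i` (the transitive closure of `IStep`);
moreover it dominates every other element of `ss(M')`. -/
theorem stmt_14 (M M' : Multiset O) (h : M' ≤ M) :
    InSS M M' (ovl M') ∧
    (∀ S, InSS M M' S → ¬ Relation.TransGen (IStep M) S (ovl M')) ∧
    (∀ S, InSS M M' S → S = ovl M' ∨ Relation.TransGen (IStep M) (ovl M') S) ∧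
    (∀ S, InSS M M' S →
      (∀ S', InSS M M' S' → ¬ Relation.TransGen (IStep M) S' S) → S = ovl M') := by
  have hovl := inSS_ovl h
  have hreach : ∀ S, InSS M M' S → S = ovl M' ∨ TransGen (IStep M) (ovl M') S :=
    fun S hS => reflTransGen_iff_eq_or_transGen.1 (reflTransGen_ovl hS)
  refine ⟨hovl, fun S hS hlt => ?_, hreach, fun S hS hmax => ?_⟩
  · exact lt_irrefl _ (indexSum_lt_of_transGen (hlt.trans_left (reflTransGen_ovl hS)))
  · exact (hreach S hS).resolve_right (hmax _ hovl)
end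

section
/- Let N be a C^{ℵ0}I-net on O and M a finite multiset. For each statement c ∈ N that is meaningful w.r.t. M, there exists a statement c' (with the same comparison expressions P_1, P_2 and a rewritten precondition using only constraints of the forms o ≥ a and o ≤ b) that is equivalent to c for M, i.e., a multiset M' satisfies the precondition of c' if and only if M' ⊨ P^+, M'[P_1] ⊆ M and M'[P_2] ⊆ M. -/
variable {O : Type*} [Fintype O] [DecidableEq O]

/-!
An equality constraint is the conjunction of a `≥` and a `≤` constraint, and because `O` is
finite, `M' + P ≤ M` is the conjunction of the upper bounds `count o M' ≤ count o M - count o P`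
over all objects `o`. These bounds are exact because meaningfulness gives `P₁ ≤ M` and `P₂ ≤ M`.
-/

namespace Constraint

variable {α : Type*}

def toIneqs (con : Constraint α) : List (Constraint α) :=
  match con.rel with
  | .eq => [⟨con.obj, .ge, con.bound⟩, ⟨con.obj, .le, con.bound⟩]
  | _ => [con]

theorem rel_of_mem_toIneqs {con c' : Constraint α} (h : c' ∈ con.toIneqs) :
    c'.rel = .ge ∨ c'.rel = .le := by
  obtain ⟨o, r, a⟩ := con
  cases r <;> simp only [toIneqs, List.mem_cons, List.not_mem_nil, or_false] at h
  all_goals rcases h with rfl | rfl <;> simp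

variable [DecidableEq α]

theorem forall_holds_toIneqs_iff (con : Constraint α) (M : Multiset α) :
    (∀ c' ∈ con.toIneqs, c'.Holds M) ↔ con.Holds M := by
  obtain ⟨o, r, a⟩ := con
  cases r <;> simp [toIneqs, Holds, le_antisymm_iff, and_comm]

theorem forall_holds_flatMap_toIneqs_iff (L : List (Constraint α)) (M : Multiset α) :
    (∀ c' ∈ L.flatMap toIneqs, c'.Holds M) ↔ ∀ con ∈ L, con.Holds M := by
  simp only [List.forall_mem_flatMap, forall_holds_toIneqs_iff]

end Constraint

-- `-` truncates on `ℕ`, so these bounds express `M + A ≤ B` only when `A ≤ B`.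
noncomputable def capConstraints (A B : Multiset O) : List (Constraint O) :=
  Finset.univ.toList.map fun o => ⟨o, .le, B.count o - A.count o⟩

theorem rel_of_mem_capConstraints {A B : Multiset O} {con : Constraint O}
    (h : con ∈ capConstraints A B) : con.rel = .le := by
  obtain ⟨o, -, rfl⟩ := List.mem_map.mp h
  rfl

theorem forall_holds_capConstraints_iff {A B : Multiset O} (hAB : A ≤ B) (M : Multiset O) :
    (∀ con ∈ capConstraints A B, con.Holds M) ↔ M + A ≤ B := by
  simp only [capConstraints, List.forall_mem_map, Finset.mem_toList, Finset.mem_univ,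
    forall_const, Constraint.Holds, Multiset.le_iff_count, Multiset.count_add]
  exact forall_congr' fun o => by have := Multiset.le_iff_count.mp hAB o; omega

theorem stmt_19_general (M : Multiset O)
    (c : CAIStmt O)
    (hmean : ∃ M' : Multiset O, SatPre M' c ∧ M' + c.p1 ≤ M ∧ M' + c.p2 ≤ M) :
    ∃ pre' : List (Constraint O),
      (∀ con ∈ pre', con.rel = CRel.ge ∨ con.rel = CRel.le) ∧
      ∀ M' : Multiset O,
        (∀ con ∈ pre', con.Holds M') ↔
          (SatPre M' c ∧ M' + c.p1 ≤ M ∧ M' + c.p2 ≤ M) := by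
  obtain ⟨_, -, hM₁, hM₂⟩ := hmean
  refine ⟨c.pre.flatMap Constraint.toIneqs ++ capConstraints c.p1 M ++ capConstraints c.p2 M,
    ?_, fun M' => ?_⟩
  · simp only [List.forall_mem_append, List.forall_mem_flatMap]
    exact ⟨⟨fun _ _ _ => Constraint.rel_of_mem_toIneqs,
      fun _ h => .inr (rel_of_mem_capConstraints h)⟩,
      fun _ h => .inr (rel_of_mem_capConstraints h)⟩
  · rw [List.forall_mem_append, List.forall_mem_append,
      Constraint.forall_holds_flatMap_toIneqs_iff,
      forall_holds_capConstraints_iff (le_add_self.trans hM₁),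
      forall_holds_capConstraints_iff (le_add_self.trans hM₂), and_assoc, SatPre]

/-- reinterpretation of a meaningful statement w.r.t. `M`: there
is a precondition using only `≥`/`≤` constraints whose satisfying multisets are
exactly those `M'` with `M' ⊨ P⁺`, `M'[P₁] ⊆ M` and `M'[P₂] ⊆ M`. -/
theorem stmt_19 (N : Set (CAIStmt O)) (hfin : N.Finite) (M : Multiset O)
    (c : CAIStmt O) (hc : c ∈ N)
    (hmean : ∃ M' : Multiset O, SatPre M' c ∧ M' + c.p1 ≤ M ∧ M' + c.p2 ≤ M) :
    ∃ pre' : List (Constraint O),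
      (∀ con ∈ pre', con.rel = CRel.ge ∨ con.rel = CRel.le) ∧
      ∀ M' : Multiset O,
        (∀ con ∈ pre', con.Holds M') ↔
          (SatPre M' c ∧ M' + c.p1 ≤ M ∧ M' + c.p2 ≤ M) :=
  stmt_19_general M c hmean
end
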